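/- Every 1/3-derivation of A_ω^δ that is homogeneous of degree k with respect to the ℤ-grading (A_ω^δ)_k = ℂL_k ⊕ ℂM_k is a scalar multiple of D_k, where D_k(L_r) = L_{r+k}, D_k(M_r) = M_{r+k}. Consequently, Der_{1/3}(A_ω^δ) = ⨁_{k∈ℤ} ℂD_k. -/

import Mathlib

/-- The underlying space of `A_ω^δ`: formal ℂ-linear combinations of basis
elements indexed by `Bool × ℤ` (`(false, r)` is `L_r`, `(true, r)` is `M_r`). -/
abbrev Aod : Type := (Bool × ℤ) →₀ ℂ

/-- Basis element `L_r`. -/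
noncomputable def Lb (r : ℤ) : Aod := Finsupp.single (false, r) 1
/-- Basis element `M_r`. -/
noncomputable def Mb (r : ℤ) : Aod := Finsupp.single (true, r) 1

/-- Structure constants of `A_ω^δ`: the alternating trilinear extension of
`[L_r,L_s,M_t] = (s-r) L_{r+s+t}`, `[L_r,M_s,M_t] = (s-t) M_{r+s+t}`,
`[L_r,L_s,L_t] = [M_r,M_s,M_t] = 0`. -/
noncomputable def sc : Bool × ℤ → Bool × ℤ → Bool × ℤ → Aod
  | (false, r), (false, s), (true, t) => ((s - r : ℤ) : ℂ) • Lb (r + s + t)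
  | (false, r), (true, s), (false, t) => ((r - t : ℤ) : ℂ) • Lb (r + s + t)
  | (true, r), (false, s), (false, t) => ((t - s : ℤ) : ℂ) • Lb (r + s + t)
  | (false, r), (true, s), (true, t) => ((s - t : ℤ) : ℂ) • Mb (r + s + t)
  | (true, r), (false, s), (true, t) => ((t - r : ℤ) : ℂ) • Mb (r + s + t)
  | (true, r), (true, s), (false, t) => ((r - s : ℤ) : ℂ) • Mb (r + s + t)
  | _, _, _ => 0

/-- The 3-Lie bracket of `A_ω^δ`, extended trilinearly from the structure constants. -/
noncomputable def br (x y z : Aod) : Aod :=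
  x.sum fun a ca => y.sum fun b cb => z.sum fun c cc => (ca * cb * cc) • sc a b c

/-- The shift operator `D_k` with `D_k(L_r) = L_{r+k}` and `D_k(M_r) = M_{r+k}`. -/
noncomputable def Dk (k : ℤ) : Aod →ₗ[ℂ] Aod :=
  Finsupp.lmapDomain ℂ ℂ (fun p : Bool × ℤ => (p.1, p.2 + k))

/-- `φ` is a 1/3-derivation of `A_ω^δ`. -/
def IsOneThirdDer (φ : Aod →ₗ[ℂ] Aod) : Prop :=
  ∀ x y z : Aod, φ (br x y z) =
    (3⁻¹ : ℂ) • (br (φ x) y z + br x (φ y) z + br x y (φ z))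

lemma br_single3 (a b c : Bool × ℤ) (x y z : ℂ) :
    br (Finsupp.single a x) (Finsupp.single b y) (Finsupp.single c z)
      = (x * y * z) • sc a b c := by
  simp [br, Finsupp.sum_single_index]

lemma br_left (v : Aod) (b c : Bool × ℤ) :
    br v (Finsupp.single b 1) (Finsupp.single c 1) = v.sum fun a ca => ca • sc a b c := by
  simp [br, Finsupp.sum_single_index]

lemma br_mid (a : Bool × ℤ) (v : Aod) (c : Bool × ℤ) :
    br (Finsupp.single a 1) v (Finsupp.single c 1) = v.sum fun b cb => cb • sc a b c := by
  simp [br, Finsupp.sum_single_index]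

lemma br_right (a b : Bool × ℤ) (v : Aod) :
    br (Finsupp.single a 1) (Finsupp.single b 1) v = v.sum fun c cc => cc • sc a b c := by
  simp [br, Finsupp.sum_single_index]

lemma sum_smul_apply (v : Aod) (F : Bool × ℤ → Aod) (a₀ q : Bool × ℤ)
    (h : ∀ a, a ≠ a₀ → F a q = 0) :
    (v.sum fun a ca => ca • F a) q = v a₀ * F a₀ q := by
  classical
  rw [Finsupp.sum_apply, Finsupp.sum, Finset.sum_eq_single a₀]
  · simp
  · intro b _ hb; simp [h b hb]
  · intro h0; simp [Finsupp.notMem_support_iff.mp h0]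

lemma Dk_single (k : ℤ) (b : Bool) (r : ℤ) (c : ℂ) :
    Dk k (Finsupp.single (b, r) c) = Finsupp.single (b, r + k) c := by
  simp [Dk, Finsupp.mapDomain_single]

lemma evA (v : Aod) (s t q : ℤ) :
    (br v (Lb s) (Mb t)) (false, q) = ((2*s + t - q : ℤ) : ℂ) * v (false, q - s - t) := by
  rw [show Lb s = Finsupp.single ((false : Bool), s) (1:ℂ) from rfl,
      show Mb t = Finsupp.single ((true : Bool), t) (1:ℂ) from rfl, br_left,
      sum_smul_apply _ _ ((false : Bool), q - s - t)]
  · rw [show sc (false, q - s - t) (false, s) (true, t)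
        = ((s - (q - s - t) : ℤ) : ℂ) • Lb ((q - s - t) + s + t) from rfl]
    rw [show (q - s - t) + s + t = q by ring, Finsupp.smul_apply, Lb, Finsupp.single_eq_same,
      smul_eq_mul, mul_one]
    push_cast; ring
  · rintro ⟨b, p⟩ hne
    cases b
    · have hp : ¬ ((false, p + s + t) = ((false : Bool), q)) := by
        simp only [Prod.mk.injEq, true_and]
        intro h; exact hne (by simp [Prod.ext_iff]; omega)
      simp [sc, Lb, Finsupp.single_apply, hp]
    · simp [sc, Mb, Finsupp.single_apply]

lemma evB (v : Aod) (s t q : ℤ) :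
    (br v (Lb s) (Mb t)) (true, q) = ((s + 2*t - q : ℤ) : ℂ) * v (true, q - s - t) := by
  rw [show Lb s = Finsupp.single ((false : Bool), s) (1:ℂ) from rfl,
      show Mb t = Finsupp.single ((true : Bool), t) (1:ℂ) from rfl, br_left,
      sum_smul_apply _ _ ((true : Bool), q - s - t)]
  · rw [show sc (true, q - s - t) (false, s) (true, t)
        = ((t - (q - s - t) : ℤ) : ℂ) • Mb ((q - s - t) + s + t) from rfl]
    rw [show (q - s - t) + s + t = q by ring, Finsupp.smul_apply, Mb, Finsupp.single_eq_same,
      smul_eq_mul, mul_one]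
    push_cast; ring
  · rintro ⟨b, p⟩ hne
    cases b
    · simp [sc, Lb, Finsupp.single_apply]
    · have hp : ¬ ((true, p + s + t) = ((true : Bool), q)) := by
        simp only [Prod.mk.injEq, true_and]
        intro h; exact hne (by simp [Prod.ext_iff]; omega)
      simp [sc, Mb, Finsupp.single_apply, hp]

lemma evC (r : ℤ) (v : Aod) (t q : ℤ) :
    (br (Lb r) v (Mb t)) (false, q) = ((q - 2*r - t : ℤ) : ℂ) * v (false, q - r - t) := by
  rw [show Lb r = Finsupp.single ((false : Bool), r) (1:ℂ) from rfl,
      show Mb t = Finsupp.single ((true : Bool), t) (1:ℂ) from rfl, br_mid,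
      sum_smul_apply _ _ ((false : Bool), q - r - t)]
  · rw [show sc (false, r) (false, q - r - t) (true, t)
        = (((q - r - t) - r : ℤ) : ℂ) • Lb (r + (q - r - t) + t) from rfl]
    rw [show r + (q - r - t) + t = q by ring, Finsupp.smul_apply, Lb, Finsupp.single_eq_same,
      smul_eq_mul, mul_one]
    push_cast; ring
  · rintro ⟨b, p⟩ hne
    cases b
    · have hp : ¬ ((false, r + p + t) = ((false : Bool), q)) := by
        simp only [Prod.mk.injEq, true_and]
        intro h; exact hne (by simp [Prod.ext_iff]; omega)
      simp [sc, Lb, Finsupp.single_apply, hp]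
    · simp [sc, Mb, Finsupp.single_apply]

lemma evD (r : ℤ) (v : Aod) (t q : ℤ) :
    (br (Lb r) v (Mb t)) (true, q) = ((q - r - 2*t : ℤ) : ℂ) * v (true, q - r - t) := by
  rw [show Lb r = Finsupp.single ((false : Bool), r) (1:ℂ) from rfl,
      show Mb t = Finsupp.single ((true : Bool), t) (1:ℂ) from rfl, br_mid,
      sum_smul_apply _ _ ((true : Bool), q - r - t)]
  · rw [show sc (false, r) (true, q - r - t) (true, t)
        = (((q - r - t) - t : ℤ) : ℂ) • Mb (r + (q - r - t) + t) from rfl]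
    rw [show r + (q - r - t) + t = q by ring, Finsupp.smul_apply, Mb, Finsupp.single_eq_same,
      smul_eq_mul, mul_one]
    push_cast; ring
  · rintro ⟨b, p⟩ hne
    cases b
    · simp [sc, Lb, Finsupp.single_apply]
    · have hp : ¬ ((true, r + p + t) = ((true : Bool), q)) := by
        simp only [Prod.mk.injEq, true_and]
        intro h; exact hne (by simp [Prod.ext_iff]; omega)
      simp [sc, Mb, Finsupp.single_apply, hp]

lemma evE (r s : ℤ) (v : Aod) (q : ℤ) :
    (br (Lb r) (Lb s) v) (false, q) = ((s - r : ℤ) : ℂ) * v (true, q - r - s) := by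
  rw [show Lb r = Finsupp.single ((false : Bool), r) (1:ℂ) from rfl,
      show Lb s = Finsupp.single ((false : Bool), s) (1:ℂ) from rfl, br_right,
      sum_smul_apply _ _ ((true : Bool), q - r - s)]
  · rw [show sc (false, r) (false, s) (true, q - r - s)
        = ((s - r : ℤ) : ℂ) • Lb (r + s + (q - r - s)) from rfl]
    rw [show r + s + (q - r - s) = q by ring, Finsupp.smul_apply, Lb, Finsupp.single_eq_same,
      smul_eq_mul, mul_one]
    push_cast; ring
  · rintro ⟨b, p⟩ hne
    cases b
    · simp [sc]
    · have hp : ¬ ((false, r + s + p) = ((false : Bool), q)) := by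
        simp only [Prod.mk.injEq, true_and]
        intro h; exact hne (by simp [Prod.ext_iff]; omega)
      simp [sc, Lb, Finsupp.single_apply, hp]

lemma evF (r s : ℤ) (v : Aod) (q : ℤ) :
    (br (Lb r) (Lb s) v) (true, q) = 0 := by
  rw [show Lb r = Finsupp.single ((false : Bool), r) (1:ℂ) from rfl,
      show Lb s = Finsupp.single ((false : Bool), s) (1:ℂ) from rfl, br_right,
      sum_smul_apply _ _ ((false : Bool), 0)]
  · simp [sc]
  · rintro ⟨b, p⟩ hne
    cases b
    · simp [sc]
    · simp [sc, Lb, Finsupp.single_apply]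

lemma evG (v : Aod) (s t q : ℤ) :
    (br v (Mb s) (Mb t)) (false, q) = 0 := by
  rw [show Mb s = Finsupp.single ((true : Bool), s) (1:ℂ) from rfl,
      show Mb t = Finsupp.single ((true : Bool), t) (1:ℂ) from rfl, br_left,
      sum_smul_apply _ _ ((true : Bool), 0)]
  · simp [sc]
  · rintro ⟨b, p⟩ hne
    cases b
    · simp [sc, Mb, Finsupp.single_apply]
    · simp [sc]

lemma evH (v : Aod) (s t q : ℤ) :
    (br v (Mb s) (Mb t)) (true, q) = ((s - t : ℤ) : ℂ) * v (false, q - s - t) := by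
  rw [show Mb s = Finsupp.single ((true : Bool), s) (1:ℂ) from rfl,
      show Mb t = Finsupp.single ((true : Bool), t) (1:ℂ) from rfl, br_left,
      sum_smul_apply _ _ ((false : Bool), q - s - t)]
  · rw [show sc (false, q - s - t) (true, s) (true, t)
        = ((s - t : ℤ) : ℂ) • Mb ((q - s - t) + s + t) from rfl]
    rw [show (q - s - t) + s + t = q by ring, Finsupp.smul_apply, Mb, Finsupp.single_eq_same,
      smul_eq_mul, mul_one]
    push_cast; ring
  · rintro ⟨b, p⟩ hne
    cases b
    · have hp : ¬ ((true, p + s + t) = ((true : Bool), q)) := by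
        simp only [Prod.mk.injEq, true_and]
        intro h; exact hne (by simp [Prod.ext_iff]; omega)
      simp [sc, Mb, Finsupp.single_apply, hp]
    · simp [sc]

lemma evI (r s : ℤ) (v : Aod) (q : ℤ) :
    (br (Lb r) (Mb s) v) (false, q) = ((2*r + s - q : ℤ) : ℂ) * v (false, q - r - s) := by
  rw [show Lb r = Finsupp.single ((false : Bool), r) (1:ℂ) from rfl,
      show Mb s = Finsupp.single ((true : Bool), s) (1:ℂ) from rfl, br_right,
      sum_smul_apply _ _ ((false : Bool), q - r - s)]
  · rw [show sc (false, r) (true, s) (false, q - r - s)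
        = ((r - (q - r - s) : ℤ) : ℂ) • Lb (r + s + (q - r - s)) from rfl]
    rw [show r + s + (q - r - s) = q by ring, Finsupp.smul_apply, Lb, Finsupp.single_eq_same,
      smul_eq_mul, mul_one]
    push_cast; ring
  · rintro ⟨b, p⟩ hne
    cases b
    · have hp : ¬ ((false, r + s + p) = ((false : Bool), q)) := by
        simp only [Prod.mk.injEq, true_and]
        intro h; exact hne (by simp [Prod.ext_iff]; omega)
      simp [sc, Lb, Finsupp.single_apply, hp]
    · simp [sc, Mb, Finsupp.single_apply]

lemma evJ (r s : ℤ) (v : Aod) (q : ℤ) :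
    (br (Lb r) (Mb s) v) (true, q) = ((r + 2*s - q : ℤ) : ℂ) * v (true, q - r - s) := by
  rw [show Lb r = Finsupp.single ((false : Bool), r) (1:ℂ) from rfl,
      show Mb s = Finsupp.single ((true : Bool), s) (1:ℂ) from rfl, br_right,
      sum_smul_apply _ _ ((true : Bool), q - r - s)]
  · rw [show sc (false, r) (true, s) (true, q - r - s)
        = ((s - (q - r - s) : ℤ) : ℂ) • Mb (r + s + (q - r - s)) from rfl]
    rw [show r + s + (q - r - s) = q by ring, Finsupp.smul_apply, Mb, Finsupp.single_eq_same,
      smul_eq_mul, mul_one]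
    push_cast; ring
  · rintro ⟨b, p⟩ hne
    cases b
    · simp [sc, Lb, Finsupp.single_apply]
    · have hp : ¬ ((true, r + s + p) = ((true : Bool), q)) := by
        simp only [Prod.mk.injEq, true_and]
        intro h; exact hne (by simp [Prod.ext_iff]; omega)
      simp [sc, Mb, Finsupp.single_apply, hp]

lemma solveB (f : ℤ → ℂ) (m : ℤ)
    (H : ∀ r s t : ℤ, 3 * ((s - r : ℤ) : ℂ) * f (r + s + t)
      = ((t - r - m : ℤ) : ℂ) * f r + ((s + m - t : ℤ) : ℂ) * f s) :
    ∀ n : ℤ, f n = 0 := by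
  intro n
  set N : ℤ := n.natAbs + (n + 2*m).natAbs + 1 with hN
  have hNn : n - N ≠ 0 := by omega
  have hNx : 3*N + n + 2*m ≠ 0 := by omega
  have cN : ((n : ℂ) - N) ≠ 0 := by
    intro h; apply hNn
    have : ((n - N : ℤ) : ℂ) = 0 := by push_cast; linear_combination h
    exact_mod_cast this
  have cX : ((3*(N:ℂ) + n + 2*m)) ≠ 0 := by
    intro h; apply hNx
    have : ((3*N + n + 2*m : ℤ) : ℂ) = 0 := by push_cast; linear_combination h
    exact_mod_cast this
  -- X := N + n + (N + m)
  have h1 := H N n (N + m)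
  have h2 := H (-(m+N)) (N + n + (N + m)) (-(m+N) + m)
  rw [show -(m+N) + (N + n + (N + m)) + (-(m+N) + m) = n by ring] at h2
  push_cast at h1 h2
  have e1 : 3 * f (N + n + (N + m)) = f n := by
    apply mul_left_cancel₀ cN
    linear_combination h1
  have e2 : 3 * f n = f (N + n + (N + m)) := by
    apply mul_left_cancel₀ cX
    linear_combination h2
  linear_combination (1/8 : ℂ) * e1 + (3/8 : ℂ) * e2

lemma solveAD (a d : ℤ → ℂ) (m : ℤ)
    (HA : ∀ r s t : ℤ, 3 * ((s - r : ℤ) : ℂ) * a (r + s + t)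
      = ((s - r - m : ℤ) : ℂ) * a r + ((s - r + m : ℤ) : ℂ) * a s + ((s - r : ℤ) : ℂ) * d t)
    (HD : ∀ r s t : ℤ, 3 * ((s - t : ℤ) : ℂ) * d (r + s + t)
      = ((s - t : ℤ) : ℂ) * a r + ((s + m - t : ℤ) : ℂ) * d s + ((s - t - m : ℤ) : ℂ) * d t) :
    ∀ n : ℤ, a n = a 0 ∧ d n = a 0 := by
  have hd : ∀ t : ℤ, d t = 3 * a (t+1) - (1 - (m:ℂ)) * a 0 - (1 + (m:ℂ)) * a 1 := by
    intro t
    have h := HA 0 1 t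
    rw [show (0:ℤ) + 1 + t = t + 1 by ring] at h
    push_cast at h
    linear_combination -h
  have hd1 : d 1 = 3 * a 2 - (1 - (m:ℂ)) * a 0 - (1 + (m:ℂ)) * a 1 := by
    have h := hd 1; rw [show (1:ℤ) + 1 = 2 by norm_num] at h; exact h
  have hd0 : d 0 = 3 * a 1 - (1 - (m:ℂ)) * a 0 - (1 + (m:ℂ)) * a 1 := by
    have h := hd 0; rw [show (0:ℤ) + 1 = 1 by norm_num] at h; exact h
  have hdm1 : d (-1) = 3 * a 0 - (1 - (m:ℂ)) * a 0 - (1 + (m:ℂ)) * a 1 := by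
    have h := hd (-1); rw [show (-1:ℤ) + 1 = 0 by norm_num] at h; exact h
  have h2 : ∀ n : ℤ, 3 * d n = a (n-1) + (1 + (m:ℂ)) * d 1 + (1 - (m:ℂ)) * d 0 := by
    intro n
    have h := HD (n-1) 1 0
    rw [show n - 1 + 1 + 0 = n by ring] at h
    push_cast at h
    linear_combination h
  have h3 : ∀ n : ℤ, 6 * d n = 2 * a n + (2 + (m:ℂ)) * d 1 + (2 - (m:ℂ)) * d (-1) := by
    intro n
    have h := HD n 1 (-1)
    rw [show n + 1 + (-1) = n by ring] at h
    push_cast at h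
    linear_combination h
  have R2 : ∀ n : ℤ, 9 * a (n+1) = a (n-1) + 3*(1+(m:ℂ))*a 2 + (4 - 2*(m:ℂ))*a 1
      + (1-(m:ℂ))*a 0 := by
    intro n
    linear_combination h2 n - 3 * hd n + (1+(m:ℂ)) * hd1 + (1-(m:ℂ)) * hd0
  have R3 : ∀ n : ℤ, 18 * a (n+1) = 2 * a n + 3*(2+(m:ℂ))*a 2 + 2*(1+(m:ℂ))*a 1
      + (8 - 5*(m:ℂ))*a 0 := by
    intro n
    linear_combination h3 n - 6 * hd n + (2+(m:ℂ)) * hd1 + (2-(m:ℂ)) * hdm1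
  have R4 : ∀ n : ℤ, 2 * a (n+1) = 2 * a n + 3*(m:ℂ)*a 2 + (6-6*(m:ℂ))*a 1
      + (3*(m:ℂ)-6)*a 0 := by
    intro n
    have h := R2 (n+1)
    rw [show n + 1 - 1 = n by ring] at h
    linear_combination 2 * h - R3 (n+1)
  have R30 : (18:ℂ) * a 1 = 2 * a 0 + 3*(2+(m:ℂ))*a 2 + 2*(1+(m:ℂ))*a 1 + (8 - 5*(m:ℂ))*a 0 := by
    have h := R3 0; rw [show (0:ℤ) + 1 = 1 by norm_num] at h; exact h
  have R40 : (2:ℂ) * a 1 = 2 * a 0 + 3*(m:ℂ)*a 2 + (6-6*(m:ℂ))*a 1 + (3*(m:ℂ)-6)*a 0 := by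
    have h := R4 0; rw [show (0:ℤ) + 1 = 1 by norm_num] at h; exact h
  have ha : ∀ n : ℤ, a n = a 0 := by
    intro n
    linear_combination (1/16 : ℂ) * R3 n - (1/16 : ℂ) * R30 - (9/16 : ℂ) * R4 n
      + (9/16 : ℂ) * R40
  intro n
  refine ⟨ha n, ?_⟩
  linear_combination hd n + 3 * ha (n+1) - (1 + (m:ℂ)) * ha 1

lemma br_LLM (r s t : ℤ) : br (Lb r) (Lb s) (Mb t) = ((s - r : ℤ) : ℂ) • Lb (r + s + t) := by
  rw [show Lb r = Finsupp.single ((false : Bool), r) (1:ℂ) from rfl,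
      show Lb s = Finsupp.single ((false : Bool), s) (1:ℂ) from rfl,
      show Mb t = Finsupp.single ((true : Bool), t) (1:ℂ) from rfl, br_single3]
  simp [sc]

lemma br_LMM (r s t : ℤ) : br (Lb r) (Mb s) (Mb t) = ((s - t : ℤ) : ℂ) • Mb (r + s + t) := by
  rw [show Lb r = Finsupp.single ((false : Bool), r) (1:ℂ) from rfl,
      show Mb s = Finsupp.single ((true : Bool), s) (1:ℂ) from rfl,
      show Mb t = Finsupp.single ((true : Bool), t) (1:ℂ) from rfl, br_single3]
  simp [sc]

lemma master (φ : Aod →ₗ[ℂ] Aod) (hφ : IsOneThirdDer φ) :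
    ∀ r p : ℤ,
      φ (Lb r) (false, p) = φ (Lb 0) (false, p - r) ∧
      φ (Lb r) (true, p) = 0 ∧
      φ (Mb r) (false, p) = 0 ∧
      φ (Mb r) (true, p) = φ (Lb 0) (false, p - r) := by
  have HA : ∀ r s t q : ℤ, 3 * ((s - r : ℤ) : ℂ) * φ (Lb (r+s+t)) (false, q)
      = ((2*s + t - q : ℤ) : ℂ) * φ (Lb r) (false, q - s - t)
      + ((q - 2*r - t : ℤ) : ℂ) * φ (Lb s) (false, q - r - t)
      + ((s - r : ℤ) : ℂ) * φ (Mb t) (true, q - r - s) := by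
    intro r s t q
    have key := hφ (Lb r) (Lb s) (Mb t)
    rw [br_LLM, map_smul] at key
    have h := congrArg (fun w : Aod => w (false, q)) key
    simp only [Finsupp.smul_apply, Finsupp.add_apply, smul_eq_mul] at h
    rw [evA, evC, evE] at h
    linear_combination 3 * h
  have HB : ∀ r s t q : ℤ, 3 * ((s - r : ℤ) : ℂ) * φ (Lb (r+s+t)) (true, q)
      = ((s + 2*t - q : ℤ) : ℂ) * φ (Lb r) (true, q - s - t)
      + ((q - r - 2*t : ℤ) : ℂ) * φ (Lb s) (true, q - r - t) := by
    intro r s t q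
    have key := hφ (Lb r) (Lb s) (Mb t)
    rw [br_LLM, map_smul] at key
    have h := congrArg (fun w : Aod => w (true, q)) key
    simp only [Finsupp.smul_apply, Finsupp.add_apply, smul_eq_mul] at h
    rw [evB, evD, evF] at h
    linear_combination 3 * h
  have HC : ∀ r s t q : ℤ, 3 * ((s - t : ℤ) : ℂ) * φ (Mb (r+s+t)) (false, q)
      = ((q - 2*r - t : ℤ) : ℂ) * φ (Mb s) (false, q - r - t)
      + ((2*r + s - q : ℤ) : ℂ) * φ (Mb t) (false, q - r - s) := by
    intro r s t q
    have key := hφ (Lb r) (Mb s) (Mb t)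
    rw [br_LMM, map_smul] at key
    have h := congrArg (fun w : Aod => w (false, q)) key
    simp only [Finsupp.smul_apply, Finsupp.add_apply, smul_eq_mul] at h
    rw [evG, evC, evI] at h
    linear_combination 3 * h
  have HDq : ∀ r s t q : ℤ, 3 * ((s - t : ℤ) : ℂ) * φ (Mb (r+s+t)) (true, q)
      = ((s - t : ℤ) : ℂ) * φ (Lb r) (false, q - s - t)
      + ((q - r - 2*t : ℤ) : ℂ) * φ (Mb s) (true, q - r - t)
      + ((r + 2*s - q : ℤ) : ℂ) * φ (Mb t) (true, q - r - s) := by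
    intro r s t q
    have key := hφ (Lb r) (Mb s) (Mb t)
    rw [br_LMM, map_smul] at key
    have h := congrArg (fun w : Aod => w (true, q)) key
    simp only [Finsupp.smul_apply, Finsupp.add_apply, smul_eq_mul] at h
    rw [evH, evD, evJ] at h
    linear_combination 3 * h
  intro r p
  set m : ℤ := p - r with hm
  have hB : ∀ n : ℤ, φ (Lb n) (true, n + m) = 0 := by
    apply solveB (fun n => φ (Lb n) (true, n + m)) m
    intro r' s' t'
    have h := HB r' s' t' (r' + s' + t' + m)
    rw [show r' + s' + t' + m - s' - t' = r' + m by ring,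
        show r' + s' + t' + m - r' - t' = s' + m by ring] at h
    push_cast at h ⊢
    linear_combination h
  have hC : ∀ n : ℤ, φ (Mb n) (false, n + m) = 0 := by
    apply solveB (fun n => φ (Mb n) (false, n + m)) m
    intro r' s' t'
    have h := HC t' s' r' (t' + s' + r' + m)
    rw [show t' + s' + r' + m - t' - r' = s' + m by ring,
        show t' + s' + r' + m - t' - s' = r' + m by ring,
        show t' + s' + r' + m = r' + s' + t' + m by ring,
        show t' + s' + r' = r' + s' + t' by ring] at h
    push_cast at h ⊢
    linear_combination h
  have hAD : ∀ n : ℤ, φ (Lb n) (false, n + m) = φ (Lb 0) (false, 0 + m) ∧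
      φ (Mb n) (true, n + m) = φ (Lb 0) (false, 0 + m) := by
    apply solveAD (fun n => φ (Lb n) (false, n + m)) (fun n => φ (Mb n) (true, n + m)) m
    · intro r' s' t'
      have h := HA r' s' t' (r' + s' + t' + m)
      rw [show r' + s' + t' + m - s' - t' = r' + m by ring,
          show r' + s' + t' + m - r' - t' = s' + m by ring,
          show r' + s' + t' + m - r' - s' = t' + m by ring] at h
      push_cast at h ⊢
      linear_combination h
    · intro r' s' t'
      have h := HDq r' s' t' (r' + s' + t' + m)
      rw [show r' + s' + t' + m - s' - t' = r' + m by ring,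
          show r' + s' + t' + m - r' - t' = s' + m by ring,
          show r' + s' + t' + m - r' - s' = t' + m by ring] at h
      push_cast at h ⊢
      linear_combination h
  have hrm : r + m = p := by omega
  have h0m : (0 : ℤ) + m = p - r := by omega
  refine ⟨?_, ?_, ?_, ?_⟩
  · have h := (hAD r).1; rwa [hrm, h0m] at h
  · have h := hB r; rwa [hrm] at h
  · have h := hC r; rwa [hrm] at h
  · have h := (hAD r).2; rwa [hrm, h0m] at h

lemma br_zero1 (y z : Aod) : br 0 y z = 0 := by simp [br]

lemma br_zero2 (x z : Aod) : br x 0 z = 0 := by simp [br]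

lemma br_zero3 (x y : Aod) : br x y 0 = 0 := by simp [br]

lemma br_add1 (x x' y z : Aod) : br (x + x') y z = br x y z + br x' y z := by
  unfold br
  rw [Finsupp.sum_add_index']
  · intro a; simp
  · intro a c1 c2; simp [add_mul, add_smul, Finsupp.sum_add]

lemma br_add2 (x y y' z : Aod) : br x (y + y') z = br x y z + br x y' z := by
  unfold br
  rw [← Finsupp.sum_add]
  apply Finsupp.sum_congr
  intro a _
  rw [Finsupp.sum_add_index']
  · intro b; simp
  · intro b c1 c2; simp [mul_add, add_mul, add_smul, Finsupp.sum_add]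

lemma br_add3 (x y z z' : Aod) : br x y (z + z') = br x y z + br x y z' := by
  unfold br
  rw [← Finsupp.sum_add]
  apply Finsupp.sum_congr
  intro a _
  rw [← Finsupp.sum_add]
  apply Finsupp.sum_congr
  intro b _
  rw [Finsupp.sum_add_index']
  · intro c; simp
  · intro c c1 c2; simp [mul_add, add_smul]

set_option maxHeartbeats 1000000 in
lemma Dk_der (k : ℤ) : IsOneThirdDer (Dk k) := by
  intro x y z
  induction x using Finsupp.induction_linear with
  | zero => simp [br_zero1]
  | add f g hf hg =>
    rw [br_add1, map_add, map_add, hf, hg, br_add1, br_add1, br_add1]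
    module
  | single a ca =>
    induction y using Finsupp.induction_linear with
    | zero => simp [br_zero2]
    | add f g hf hg =>
      rw [br_add2, map_add, map_add, hf, hg, br_add2, br_add2, br_add2]
      module
    | single b cb =>
      induction z using Finsupp.induction_linear with
      | zero => simp [br_zero3]
      | add f g hf hg =>
        rw [br_add3, map_add, map_add, hf, hg, br_add3, br_add3, br_add3]
        module
      | single c cc =>
        obtain ⟨b1, r⟩ := a
        obtain ⟨b2, s⟩ := b
        obtain ⟨b3, t⟩ := c
        have hD : ∀ (bb : Bool) (n : ℤ) (u : ℂ),
            Dk k (Finsupp.single (bb, n) u) = Finsupp.single (bb, n + k) u := fun bb n u => by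
          simp [Dk, Finsupp.mapDomain_single]
        rw [br_single3, map_smul, hD, hD, hD, br_single3, br_single3, br_single3]
        cases b1 <;> cases b2 <;> cases b3
        · simp [sc]
        · -- L L M
          simp only [sc, map_smul, hD, Lb]
          rw [show r + k + s + t = r + s + t + k by ring,
              show r + (s + k) + t = r + s + t + k by ring,
              show r + s + (t + k) = r + s + t + k by ring]
          push_cast
          module
        · -- L M L
          simp only [sc, map_smul, hD, Lb]
          rw [show r + k + s + t = r + s + t + k by ring,
              show r + (s + k) + t = r + s + t + k by ring,
              show r + s + (t + k) = r + s + t + k by ring]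
          push_cast
          module
        · -- L M M
          simp only [sc, map_smul, hD, Mb]
          rw [show r + k + s + t = r + s + t + k by ring,
              show r + (s + k) + t = r + s + t + k by ring,
              show r + s + (t + k) = r + s + t + k by ring]
          push_cast
          module
        · -- M L L
          simp only [sc, map_smul, hD, Lb]
          rw [show r + k + s + t = r + s + t + k by ring,
              show r + (s + k) + t = r + s + t + k by ring,
              show r + s + (t + k) = r + s + t + k by ring]
          push_cast
          module
        · -- M L M
          simp only [sc, map_smul, hD, Mb]
          rw [show r + k + s + t = r + s + t + k by ring,
              show r + (s + k) + t = r + s + t + k by ring,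
              show r + s + (t + k) = r + s + t + k by ring]
          push_cast
          module
        · -- M M L
          simp only [sc, map_smul, hD, Mb]
          rw [show r + k + s + t = r + s + t + k by ring,
              show r + (s + k) + t = r + s + t + k by ring,
              show r + s + (t + k) = r + s + t + k by ring]
          push_cast
          module
        · simp [sc]

lemma Dk_single' (k : ℤ) (b : Bool) (r : ℤ) (c : ℂ) :
    Dk k (Finsupp.single (b, r) c) = Finsupp.single (b, r + k) c := by
  simp [Dk, Finsupp.mapDomain_single]


/-- Every homogeneous 1/3-derivation of `A_ω^δ` of degree `k` is a
scalar multiple of `D_k`; consequently `Der_{1/3}(A_ω^δ) = ⨁_{k ∈ ℤ} ℂ D_k`. -/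
theorem Aod_one_third_derivations :
    (∀ (k : ℤ) (φ : Aod →ₗ[ℂ] Aod), IsOneThirdDer φ →
      (∀ h : ℤ, ∀ v ∈ Submodule.span ℂ {Lb h, Mb h},
        φ v ∈ Submodule.span ℂ {Lb (h + k), Mb (h + k)}) →
      ∃ c : ℂ, φ = c • Dk k) ∧
    (∀ k : ℤ, IsOneThirdDer (Dk k)) ∧
    (∀ φ : Aod →ₗ[ℂ] Aod, IsOneThirdDer φ →
      φ ∈ ⨆ k : ℤ, Submodule.span ℂ {Dk k}) ∧
    iSupIndep (fun k : ℤ => Submodule.span ℂ {Dk k}) := by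
  refine ⟨?_, Dk_der, ?_, ?_⟩
  · -- homogeneous case
    intro k φ hφ hhom
    refine ⟨φ (Lb 0) (false, k), ?_⟩
    have hmem : φ (Lb 0) ∈ Submodule.span ℂ {Lb (0 + k), Mb (0 + k)} :=
      hhom 0 (Lb 0) (Submodule.subset_span (by simp))
    rw [zero_add] at hmem
    obtain ⟨x, y, hv⟩ := Submodule.mem_span_pair.mp hmem
    have hker : ∀ j : ℤ, j ≠ k → φ (Lb 0) (false, j) = 0 := by
      intro j hj
      rw [← hv]
      have h1 : ¬ (((false : Bool), k) = ((false : Bool), j)) := by simp [hj.symm]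
      simp [Lb, Mb, Finsupp.single_apply, h1]
    apply Finsupp.lhom_ext
    rintro ⟨bb, n⟩ u
    rw [show (Finsupp.single ((bb : Bool), n) u : Aod) = u • Finsupp.single (bb, n) 1 by
      simp [Finsupp.smul_single]]
    rw [map_smul, map_smul, LinearMap.smul_apply, Dk_single']
    ext qp
    obtain ⟨bb', p⟩ := qp
    cases bb <;> cases bb'
    · -- φ (Lb n) at (false, p)
      rw [show (Finsupp.single ((false : Bool), n) (1:ℂ) : Aod) = Lb n from rfl]
      simp only [Finsupp.smul_apply, smul_eq_mul]
      rw [(master φ hφ n p).1]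
      by_cases hp : p = n + k
      · subst hp
        rw [show n + k - n = k by ring]
        simp [Finsupp.single_apply]
      · rw [hker (p - n) (by omega)]
        have : ¬ (((false : Bool), n + k) = ((false : Bool), p)) := by
          simp [Prod.ext_iff]; omega
        simp [Finsupp.single_apply, this]
    · rw [show (Finsupp.single ((false : Bool), n) (1:ℂ) : Aod) = Lb n from rfl]
      simp only [Finsupp.smul_apply, smul_eq_mul]
      rw [(master φ hφ n p).2.1]
      simp [Finsupp.single_apply]
    · rw [show (Finsupp.single ((true : Bool), n) (1:ℂ) : Aod) = Mb n from rfl]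
      simp only [Finsupp.smul_apply, smul_eq_mul]
      rw [(master φ hφ n p).2.2.1]
      simp [Finsupp.single_apply]
    · rw [show (Finsupp.single ((true : Bool), n) (1:ℂ) : Aod) = Mb n from rfl]
      simp only [Finsupp.smul_apply, smul_eq_mul]
      rw [(master φ hφ n p).2.2.2]
      by_cases hp : p = n + k
      · subst hp
        rw [show n + k - n = k by ring]
        simp [Finsupp.single_apply]
      · rw [hker (p - n) (by omega)]
        have : ¬ (((true : Bool), n + k) = ((true : Bool), p)) := by
          simp [Prod.ext_iff]; omega
        simp [Finsupp.single_apply, this]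
  · -- decomposition
    intro φ hφ
    classical
    set T : Finset ℤ := (φ (Lb 0)).support.image Prod.snd with hT
    have hc0 : ∀ j : ℤ, j ∉ T → φ (Lb 0) (false, j) = 0 := by
      intro j hj
      by_contra hne
      exact hj (Finset.mem_image.mpr ⟨(false, j), Finsupp.mem_support_iff.mpr hne, rfl⟩)
    have hφsum : φ = ∑ k ∈ T, φ (Lb 0) (false, k) • Dk k := by
      apply Finsupp.lhom_ext
      rintro ⟨bb, n⟩ u
      rw [show (Finsupp.single ((bb : Bool), n) u : Aod) = u • Finsupp.single (bb, n) 1 by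
        simp [Finsupp.smul_single]]
      rw [map_smul, map_smul]
      rw [LinearMap.sum_apply]
      ext qp
      obtain ⟨bb', p⟩ := qp
      have hsum : (∑ k ∈ T, (φ (Lb 0) (false, k) • Dk k) (Finsupp.single (bb, n) 1)) (bb', p)
          = ∑ k ∈ T, φ (Lb 0) (false, k) *
              (Finsupp.single ((bb : Bool), n + k) (1:ℂ) : Aod) (bb', p) := by
        rw [Finsupp.finset_sum_apply]
        apply Finset.sum_congr rfl
        intro k _
        rw [LinearMap.smul_apply, Dk_single']
        simp [Finsupp.single_apply, mul_ite]
      have hcollapse : ∑ k ∈ T, φ (Lb 0) (false, k) *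
            (Finsupp.single ((bb : Bool), n + k) (1:ℂ) : Aod) (bb', p)
          = φ (Lb 0) (false, p - n) *
              (Finsupp.single ((bb : Bool), n + (p - n)) (1:ℂ) : Aod) (bb', p) := by
        apply Finset.sum_eq_single
        · intro k _ hk
          have : ¬ (((bb : Bool), n + k) = (bb', p)) := by
            simp only [Prod.mk.injEq, not_and]
            intro _; omega
          simp [Finsupp.single_apply, this]
        · intro hnot
          rw [hc0 _ hnot]; ring
      simp only [Finsupp.smul_apply, smul_eq_mul]
      rw [hsum, hcollapse, show n + (p - n) = p by ring]
      cases bb <;> cases bb'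
      · rw [show (Finsupp.single ((false : Bool), n) (1:ℂ) : Aod) = Lb n from rfl,
          (master φ hφ n p).1]
        simp [Finsupp.single_apply]
      · rw [show (Finsupp.single ((false : Bool), n) (1:ℂ) : Aod) = Lb n from rfl,
          (master φ hφ n p).2.1]
        simp [Finsupp.single_apply]
      · rw [show (Finsupp.single ((true : Bool), n) (1:ℂ) : Aod) = Mb n from rfl,
          (master φ hφ n p).2.2.1]
        simp [Finsupp.single_apply]
      · rw [show (Finsupp.single ((true : Bool), n) (1:ℂ) : Aod) = Mb n from rfl,
          (master φ hφ n p).2.2.2]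
        simp [Finsupp.single_apply]
    rw [hφsum]
    exact Submodule.sum_mem _ fun k _ =>
      Submodule.mem_iSup_of_mem k
        (Submodule.smul_mem _ _ (Submodule.mem_span_singleton_self _))
  · -- independence
    intro i
    rw [Submodule.disjoint_def]
    intro x hx hx'
    obtain ⟨c, rfl⟩ := Submodule.mem_span_singleton.mp hx
    let E : (Aod →ₗ[ℂ] Aod) →ₗ[ℂ] ℂ :=
      { toFun := fun F => (F (Lb 0)) ((false : Bool), i)
        map_add' := by intros; simp
        map_smul' := by intros; simp }
    have hEDk : ∀ j : ℤ, E (Dk j) = if j = i then 1 else 0 := by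
      intro j
      show (Dk j (Lb 0)) ((false : Bool), i) = _
      rw [show Lb 0 = Finsupp.single ((false : Bool), (0:ℤ)) (1:ℂ) from rfl, Dk_single']
      simp [Finsupp.single_apply]
    have hker : (⨆ j, ⨆ (_ : j ≠ i), Submodule.span ℂ {Dk j}) ≤ LinearMap.ker E := by
      refine iSup_le fun j => iSup_le fun hj => ?_
      rw [Submodule.span_le, Set.singleton_subset_iff]
      simp only [SetLike.mem_coe, LinearMap.mem_ker, hEDk j, if_neg hj]
    have h0 : E (c • Dk i) = 0 := hker hx'
    rw [map_smul, hEDk i, if_pos rfl, smul_eq_mul, mul_one] at h0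
    rw [h0, zero_smul]
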